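/- Let C be an N×M and D an M×N matrix with nonnegative integer entries, and set A = CD, B = DC. Then there exist group homomorphisms φ : C(X_A, ℤ) → C(X_B, ℤ) and ψ : C(X_B, ℤ) → C(X_A, ℤ) of the additive groups of integer-valued continuous functions such that ψ(φ(f)) = f ∘ σ_A for all f ∈ C(X_A, ℤ) and φ(ψ(g)) = g ∘ σ_B for all g ∈ C(X_B, ℤ). -/

import Mathlib

open Matrix

/-- The edge set of the directed graph of a rectangular matrix `C` with nonnegative integer
entries: there are `C i j` edges from vertex `i` to vertex `j`. -/
def Edge {N M : ℕ} (C : Matrix (Fin N) (Fin M) ℕ) : Type :=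
  Σ i : Fin N, Σ j : Fin M, Fin (C i j)

instance {N M : ℕ} (C : Matrix (Fin N) (Fin M) ℕ) : Fintype (Edge C) := by
  unfold Edge; have (i : Fin N) : Fintype (Σ j : Fin M, Fin (C i j)) := inferInstance; infer_instance

instance {N M : ℕ} (C : Matrix (Fin N) (Fin M) ℕ) : DecidableEq (Edge C) := by
  unfold Edge; infer_instance

/-- The source vertex of an edge. -/
def Edge.src {N M : ℕ} {C : Matrix (Fin N) (Fin M) ℕ} (e : Edge C) : Fin N := e.1

/-- The target vertex of an edge. -/
def Edge.tar {N M : ℕ} {C : Matrix (Fin N) (Fin M) ℕ} (e : Edge C) : Fin M := e.2.1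

/-- The edge set of `A = CD`, realized as composable pairs `(c, d)` of edges of `C` and `D`. -/
def PairEdgeA {N M : ℕ} (C : Matrix (Fin N) (Fin M) ℕ) (D : Matrix (Fin M) (Fin N) ℕ) :
    Type :=
  {p : Edge C × Edge D // p.1.tar = p.2.src}

/-- The edge set of `B = DC`, realized as composable pairs `(d, c)` of edges of `D` and `C`. -/
def PairEdgeB {N M : ℕ} (C : Matrix (Fin N) (Fin M) ℕ) (D : Matrix (Fin M) (Fin N) ℕ) :
    Type :=
  {p : Edge D × Edge C // p.1.tar = p.2.src}

instance {N M : ℕ} (C : Matrix (Fin N) (Fin M) ℕ) (D : Matrix (Fin M) (Fin N) ℕ) :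
    Fintype (PairEdgeA C D) := by unfold PairEdgeA; infer_instance

instance {N M : ℕ} (C : Matrix (Fin N) (Fin M) ℕ) (D : Matrix (Fin M) (Fin N) ℕ) :
    Fintype (PairEdgeB C D) := by unfold PairEdgeB; infer_instance

instance {N M : ℕ} (C : Matrix (Fin N) (Fin M) ℕ) (D : Matrix (Fin M) (Fin N) ℕ) :
    DecidableEq (PairEdgeA C D) := by unfold PairEdgeA; infer_instance

instance {N M : ℕ} (C : Matrix (Fin N) (Fin M) ℕ) (D : Matrix (Fin M) (Fin N) ℕ) :
    DecidableEq (PairEdgeB C D) := by unfold PairEdgeB; infer_instance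

instance {N M : ℕ} (C : Matrix (Fin N) (Fin M) ℕ) (D : Matrix (Fin M) (Fin N) ℕ) :
    TopologicalSpace (PairEdgeA C D) := ⊥

instance {N M : ℕ} (C : Matrix (Fin N) (Fin M) ℕ) (D : Matrix (Fin M) (Fin N) ℕ) :
    DiscreteTopology (PairEdgeA C D) := ⟨rfl⟩

instance {N M : ℕ} (C : Matrix (Fin N) (Fin M) ℕ) (D : Matrix (Fin M) (Fin N) ℕ) :
    TopologicalSpace (PairEdgeB C D) := ⊥

instance {N M : ℕ} (C : Matrix (Fin N) (Fin M) ℕ) (D : Matrix (Fin M) (Fin N) ℕ) :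
    DiscreteTopology (PairEdgeB C D) := ⟨rfl⟩

/-- The one-sided topological Markov shift space `X_A` for `A = CD`, realized on the pair
edge set `E_A`, with the topology induced from the product topology. -/
abbrev XA {N M : ℕ} (C : Matrix (Fin N) (Fin M) ℕ) (D : Matrix (Fin M) (Fin N) ℕ) : Type :=
  {x : ℕ → PairEdgeA C D // ∀ n, (x n).val.2.tar = (x (n + 1)).val.1.src}

/-- The one-sided topological Markov shift space `X_B` for `B = DC`, realized on the pair
edge set `E_B`, with the topology induced from the product topology. -/
abbrev XB {N M : ℕ} (C : Matrix (Fin N) (Fin M) ℕ) (D : Matrix (Fin M) (Fin N) ℕ) : Type :=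
  {y : ℕ → PairEdgeB C D // ∀ n, (y n).val.2.tar = (y (n + 1)).val.1.src}

/-- The shift map `σ_A` on `X_A`. -/
def shiftA {N M : ℕ} (C : Matrix (Fin N) (Fin M) ℕ) (D : Matrix (Fin M) (Fin N) ℕ)
    (x : XA C D) : XA C D :=
  ⟨fun n => x.val (n + 1), fun n => x.prop (n + 1)⟩

/-- The shift map `σ_B` on `X_B`. -/
def shiftB {N M : ℕ} (C : Matrix (Fin N) (Fin M) ℕ) (D : Matrix (Fin M) (Fin N) ℕ)
    (y : XB C D) : XB C D :=
  ⟨fun n => y.val (n + 1), fun n => y.prop (n + 1)⟩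

/-!
Write a point of `X_A` as the edge sequence `c₀ d₀ c₁ d₁ …`. Regrouping it as
`c₀ (d₀ c₁) (d₁ c₂) …` and dropping `c₀` gives a point of `X_B`, and doing the same to a point
of `X_B` gives a point of `X_A`; sliding twice just drops the first pair, i.e. is the shift.
So the sliding maps `θ : X_A → X_B`, `η : X_B → X_A` are continuous with `η ∘ θ = σ_A` and
`θ ∘ η = σ_B`, and `φ f = f ∘ η`, `ψ g = g ∘ θ` do the job.

`X_B` for `(C, D)` is by definition `X_A` for `(D, C)`, so one sliding map serves both ways.
-/

namespace XA

variable {N M : ℕ} {C : Matrix (Fin N) (Fin M) ℕ} {D : Matrix (Fin M) (Fin N) ℕ}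

def slide (x : XA C D) : XA D C :=
  ⟨fun n => ⟨((x.val n).val.2, (x.val (n + 1)).val.1), x.prop n⟩,
   fun n => (x.val (n + 1)).prop⟩

theorem slide_slide (x : XA C D) : slide (slide x) = shiftA C D x := rfl

theorem continuous_apply (n : ℕ) : Continuous fun x : XA C D => x.val n :=
  (_root_.continuous_apply n).comp continuous_subtype_val

theorem continuous_shiftA : Continuous (shiftA C D) :=
  (continuous_pi fun n => continuous_apply (n + 1)).subtype_mk _

theorem continuous_slide_apply (n : ℕ) : Continuous fun x : XA C D => (slide x).val n := by
  let ComposablePair := {p : PairEdgeA C D × PairEdgeA C D // p.1.val.2.tar = p.2.val.1.src}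
  have hpair : Continuous fun x : XA C D =>
      (⟨(x.val n, x.val (n + 1)), x.prop n⟩ : ComposablePair) :=
    ((continuous_apply n).prodMk (continuous_apply (n + 1))).subtype_mk _
  exact (continuous_of_discreteTopology (β := PairEdgeA D C)
    (f := fun p : ComposablePair => ⟨(p.val.1.val.2, p.val.2.val.1), p.prop⟩)).comp hpair

theorem continuous_slide : Continuous (slide : XA C D → XA D C) :=
  (continuous_pi continuous_slide_apply).subtype_mk _

end XA

/-- Let `C`, `D` be rectangular nonnegative integer matrices, `A = CD`,
`B = DC`.  Then there exist group homomorphisms `φ : C(X_A, ℤ) → C(X_B, ℤ)` and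
`ψ : C(X_B, ℤ) → C(X_A, ℤ)` such that `ψ(φ(f)) = f ∘ σ_A` and `φ(ψ(g)) = g ∘ σ_B`.
Here `σ_A`, `σ_B` are the (continuous) shift maps, characterized by the first two
conditions below. -/
theorem stmt_12 (N M : ℕ) (C : Matrix (Fin N) (Fin M) ℕ) (D : Matrix (Fin M) (Fin N) ℕ) :
    ∃ (σA : C(XA C D, XA C D)) (σB : C(XB C D, XB C D)),
      (∀ (x : XA C D) (n : ℕ), (σA x).val n = x.val (n + 1)) ∧
      (∀ (y : XB C D) (n : ℕ), (σB y).val n = y.val (n + 1)) ∧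
      ∃ (φ : C(XA C D, ℤ) →+ C(XB C D, ℤ)) (ψ : C(XB C D, ℤ) →+ C(XA C D, ℤ)),
        (∀ f : C(XA C D, ℤ), ψ (φ f) = f.comp σA) ∧
        (∀ g : C(XB C D, ℤ), φ (ψ g) = g.comp σB) := by
  let θ : C(XA C D, XB C D) := ⟨XA.slide, XA.continuous_slide⟩
  let η : C(XB C D, XA C D) := ⟨XA.slide, XA.continuous_slide⟩
  refine ⟨⟨shiftA C D, XA.continuous_shiftA⟩, ⟨shiftB C D, XA.continuous_shiftA⟩,
    fun _ _ => rfl, fun _ _ => rfl, η.compAddMonoidHom', θ.compAddMonoidHom', ?_, ?_⟩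
  · intro f
    ext x
    exact congrArg f (XA.slide_slide x)
  · intro g
    ext y
    exact congrArg g (XA.slide_slide (C := D) (D := C) y)
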